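/- arXiv:1210.3607 — 7 statements merged into one kernel-verified Lean document; each statement's English description precedes it below -/
import Mathlib

section
/- Let A be an n×n irreducible max-stochastic matrix with nonnegative real entries. Then for every j ∈ {1,…,n}, min_{1≤i≤n} a*_{ij} = min_{q ∈ N^C(A)} a*_{qj}, where A* is the Kleene star of A and N^C(A) is the set of critical nodes of A. -/
open scoped Classical

/-- `T` is an `i`-tree in the digraph on vertex set `V` with edge relation `R`:
every node `j ≠ i` has exactly one outgoing edge in `T`, node `i` has no
outgoing edge in `T`, all edges of `T` are edges of the digraph, and `T`
contains no directed cycle. -/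
def IsITree {V : Type*} (R : V → V → Prop) (i : V) (T : Finset (V × V)) : Prop :=
  (∀ e ∈ T, R e.1 e.2) ∧
  (∀ j : V, j ≠ i → ∃! k : V, (j, k) ∈ T) ∧
  (∀ k : V, (i, k) ∉ T) ∧
  (∀ j : V, ¬ Relation.TransGen (fun a b => (a, b) ∈ T) j j)

/-- Edge relation of the weighted digraph `D(A)`: there is an edge `(a, b)` iff `A a b > 0`. -/
def edgeRel {n : ℕ} (A : Matrix (Fin n) (Fin n) ℝ) : Fin n → Fin n → Prop :=
  fun a b => 0 < A a b

/-- `A` is irreducible: for all `i ≠ j` there is a directed path from `i` to `j` in `D(A)`. -/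
def IrreducibleMat {n : ℕ} (A : Matrix (Fin n) (Fin n) ℝ) : Prop :=
  ∀ i j : Fin n, i ≠ j → Relation.TransGen (edgeRel A) i j

/-- The weight `π(T, A)` of a set `T` of edges: the product of the corresponding entries of `A`. -/
noncomputable def treeWeight {n : ℕ} (A : Matrix (Fin n) (Fin n) ℝ)
    (T : Finset (Fin n × Fin n)) : ℝ :=
  ∏ e ∈ T, A e.1 e.2

/-- The finset `𝒯ᵢ` of all `i`-trees of `D(A)`. -/
noncomputable def iTrees {n : ℕ} (A : Matrix (Fin n) (Fin n) ℝ) (i : Fin n) :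
    Finset (Finset (Fin n × Fin n)) :=
  Finset.univ.filter (IsITree (edgeRel A) i)

/-- `A` is max-stochastic: every row has maximum entry `1`. -/
def MaxStochastic {n : ℕ} (A : Matrix (Fin n) (Fin n) ℝ) : Prop :=
  ∀ i, IsGreatest (Set.range (A i)) 1

/-- `w` is the maximal RST vector of `A`: `w i` is the maximum of the weights of
the `i`-trees of `D(A)`. -/
def IsMaxRSTVector {n : ℕ} (A : Matrix (Fin n) (Fin n) ℝ) (w : Fin n → ℝ) : Prop :=
  ∀ i, IsGreatest {x | ∃ T, IsITree (edgeRel A) i T ∧ x = treeWeight A T} (w i)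

/-- The edges of the closed walk determined by the list of vertices `c`
(consecutive edges together with the wrap-around edge). -/
def cycleEdges {n : ℕ} (c : List (Fin n)) : List (Fin n × Fin n) :=
  c.zip (c.rotate 1)

/-- `c` is a directed cycle in `D(A)`. -/
def IsCycleIn {n : ℕ} (A : Matrix (Fin n) (Fin n) ℝ) (c : List (Fin n)) : Prop :=
  c ≠ [] ∧ ∀ e ∈ cycleEdges c, 0 < A e.1 e.2

/-- The geometric mean of the edge weights of the cycle `c`: the `k`-th root of
the product of the weights, where `k` is the length of the cycle. -/
noncomputable def cycleGeoMean {n : ℕ} (A : Matrix (Fin n) (Fin n) ℝ)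
    (c : List (Fin n)) : ℝ :=
  (((cycleEdges c).map fun e => A e.1 e.2).prod) ^ ((c.length : ℝ)⁻¹)

/-- `i` is a critical node of `A` (with `μ(A) = 1`): `i` lies on a cycle whose
geometric mean is `1 = μ(A)`. -/
def CriticalNode {n : ℕ} (A : Matrix (Fin n) (Fin n) ℝ) (i : Fin n) : Prop :=
  ∃ c, IsCycleIn A c ∧ cycleGeoMean A c = 1 ∧ i ∈ c

/-- `(a, b)` is a critical edge of `A` (with `μ(A) = 1`): it lies on a cycle whose
geometric mean is `1 = μ(A)`. -/
def CriticalEdge {n : ℕ} (A : Matrix (Fin n) (Fin n) ℝ) (a b : Fin n) : Prop :=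
  ∃ c, IsCycleIn A c ∧ cycleGeoMean A c = 1 ∧ (a, b) ∈ cycleEdges c

/-- `i` and `j` lie in the same strongly connected component of the critical
graph `D^C(A)`. -/
def SameCritComponent {n : ℕ} (A : Matrix (Fin n) (Fin n) ℝ) (i j : Fin n) : Prop :=
  Relation.ReflTransGen (CriticalEdge A) i j ∧ Relation.ReflTransGen (CriticalEdge A) j i

/-- The consecutive edges of the walk determined by the list of vertices `P`. -/
def pathEdges {n : ℕ} (P : List (Fin n)) : List (Fin n × Fin n) :=
  P.zip P.tail

/-- The weight of a path: the product of its edge weights. -/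
noncomputable def pathWeight {n : ℕ} (A : Matrix (Fin n) (Fin n) ℝ)
    (P : List (Fin n)) : ℝ :=
  ((pathEdges P).map fun e => A e.1 e.2).prod

/-- `P` is a directed path in `D(A)` from `i` to `j`. -/
def IsPathIn {n : ℕ} (A : Matrix (Fin n) (Fin n) ℝ) (i j : Fin n)
    (P : List (Fin n)) : Prop :=
  P.head? = some i ∧ P.getLast? = some j ∧ 2 ≤ P.length ∧
  ∀ e ∈ pathEdges P, 0 < A e.1 e.2

/-- `S` is the Kleene star `A*` of `A`: `S i i = 1`, and for `i ≠ j`, `S i j` is the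
maximum weight of a directed path from `i` to `j` in `D(A)` (and `0` if there is none). -/
def IsKleeneStar {n : ℕ} (A S : Matrix (Fin n) (Fin n) ℝ) : Prop :=
  (∀ i, S i i = 1) ∧
  ∀ i j, i ≠ j →
    S i j = sSup (insert (0 : ℝ) {x | ∃ P, IsPathIn A i j P ∧ x = pathWeight A P})

/-- `A` is `p`-stochastic: `∑ⱼ aᵢⱼᵖ = 1` for every row `i`. -/
def PStochastic {n : ℕ} (A : Matrix (Fin n) (Fin n) ℝ) (p : ℕ) : Prop :=
  ∀ i, ∑ j, A i j ^ p = 1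

private lemma list_prod_mem01 (l : List ℝ) (h : ∀ x ∈ l, 0 ≤ x ∧ x ≤ 1) :
    0 ≤ l.prod ∧ l.prod ≤ 1 := by
  induction l with
  | nil => simp
  | cons a t ih =>
    have ha := h a (by simp)
    have ht := ih (fun x hx => h x (by simp [hx]))
    rw [List.prod_cons]
    constructor
    · exact mul_nonneg ha.1 ht.1
    · calc a * t.prod ≤ 1 * 1 := mul_le_mul ha.2 ht.2 ht.1 zero_le_one
        _ = 1 := by ring

private lemma pathEdges_cons_cons {n : ℕ} (a b : Fin n) (l : List (Fin n)) :
    pathEdges (a :: b :: l) = (a, b) :: pathEdges (b :: l) := rfl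

private lemma pathEdges_append {n : ℕ} (P Q : List (Fin n)) (q : Fin n)
    (hP : P.getLast? = some q) (hQ : Q.head? = some q) :
    pathEdges (P ++ Q.tail) = pathEdges P ++ pathEdges Q := by
  induction P with
  | nil => simp at hP
  | cons p P' ih =>
    cases P' with
    | nil =>
      simp only [List.getLast?_singleton, Option.some.injEq] at hP
      subst hP
      obtain ⟨t, rfl⟩ : ∃ t, Q = p :: t := by
        cases Q with
        | nil => simp at hQ
        | cons q' t =>
          simp only [List.head?_cons, Option.some.injEq] at hQ
          exact ⟨t, by rw [hQ]⟩
      show pathEdges (p :: t) = pathEdges [p] ++ pathEdges (p :: t)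
      have : pathEdges [p] = [] := rfl
      rw [this, List.nil_append]
    | cons p2 P'' =>
      have hlast : (p2 :: P'').getLast? = some q := by
        rw [← hP]; exact (List.getLast?_cons_cons ..).symm
      have h1 : (p :: p2 :: P'') ++ Q.tail = p :: p2 :: (P'' ++ Q.tail) := by simp
      rw [h1, pathEdges_cons_cons]
      have h2 : p2 :: (P'' ++ Q.tail) = (p2 :: P'') ++ Q.tail := by simp
      rw [h2, ih hlast, pathEdges_cons_cons, List.cons_append]

private lemma isPathIn_append {n : ℕ} (A : Matrix (Fin n) (Fin n) ℝ) {i q j : Fin n}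
    {P Q : List (Fin n)} (hP : IsPathIn A i q P) (hQ : IsPathIn A q j Q) :
    IsPathIn A i j (P ++ Q.tail) ∧
      pathWeight A (P ++ Q.tail) = pathWeight A P * pathWeight A Q := by
  obtain ⟨hP1, hP2, hP3, hP4⟩ := hP
  obtain ⟨hQ1, hQ2, hQ3, hQ4⟩ := hQ
  have hE := pathEdges_append P Q q hP2 hQ1
  obtain ⟨t, rfl⟩ : ∃ t, Q = q :: t := by
    cases Q with
    | nil => simp at hQ1
    | cons q' t =>
      simp only [List.head?_cons, Option.some.injEq] at hQ1
      exact ⟨t, by rw [hQ1]⟩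
  have ht : t ≠ [] := by
    intro h; subst h; simp at hQ3
  simp only [List.tail_cons] at hE ⊢
  refine ⟨⟨?_, ?_, ?_, ?_⟩, ?_⟩
  · rw [List.head?_append, hP1]; rfl
  · rw [List.getLast?_append_of_ne_nil P ht]
    cases t with
    | nil => exact absurd rfl ht
    | cons b t' => rw [List.getLast?_cons_cons] at hQ2; exact hQ2
  · rw [List.length_append]; omega
  · intro e he
    rw [hE] at he
    rcases List.mem_append.mp he with h | h
    · exact hP4 e h
    · exact hQ4 e h
  · unfold pathWeight
    rw [hE, List.map_append, List.prod_append]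

private lemma iter_path {n : ℕ} (A : Matrix (Fin n) (Fin n) ℝ) (f : Fin n → Fin n)
    (hA1 : ∀ y, A y (f y) = 1) (i : Fin n) (a : ℕ) (ha : 1 ≤ a) :
    IsPathIn A i (f^[a] i) ((List.range (a+1)).map (fun t => f^[t] i)) ∧
      pathWeight A ((List.range (a+1)).map (fun t => f^[t] i)) = 1 := by
  set P : List (Fin n) := (List.range (a+1)).map (fun t => f^[t] i) with hPdef
  have hlen : P.length = a + 1 := by simp [hPdef]
  have hedge : ∀ e ∈ pathEdges P, A e.1 e.2 = 1 := by
    intro e he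
    obtain ⟨m, hm, hme⟩ := List.mem_iff_getElem.mp he
    have hzl : (pathEdges P).length = a := by
      simp [pathEdges, hlen]
    have hma : m < a := by omega
    have he1 : e = (f^[m] i, f^[m+1] i) := by
      rw [← hme]
      simp only [pathEdges, List.getElem_zip, List.getElem_tail, hPdef,
        List.getElem_map, List.getElem_range]
    rw [he1]
    rw [Function.iterate_succ_apply']
    exact hA1 _
  refine ⟨⟨?_, ?_, ?_, fun e he => by rw [hedge e he]; norm_num⟩, ?_⟩
  · rw [hPdef, List.range_succ_eq_map]
    simp
  · rw [hPdef, List.range_succ, List.map_append]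
    simp [List.getLast?_concat]
  · omega
  · unfold pathWeight
    apply List.prod_eq_one
    intro x hx
    obtain ⟨e, he, rfl⟩ := List.mem_map.mp hx
    exact hedge e he

private lemma iter_cycle {n : ℕ} (A : Matrix (Fin n) (Fin n) ℝ) (f : Fin n → Fin n)
    (hA1 : ∀ y, A y (f y) = 1) (q : Fin n) (k : ℕ) (hk : 1 ≤ k) (hqk : f^[k] q = q) :
    CriticalNode A q := by
  set c : List (Fin n) := (List.range k).map (fun m => f^[m] q) with hc
  have hlen : c.length = k := by simp [hc]
  have hcne : c ≠ [] := by
    intro h; rw [h] at hlen; simp at hlen; omega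
  have hedge : ∀ e ∈ cycleEdges c, A e.1 e.2 = 1 := by
    intro e he
    obtain ⟨m, hm, hme⟩ := List.mem_iff_getElem.mp he
    have hzl : (cycleEdges c).length = k := by
      simp [cycleEdges, hlen]
    have hmk : m < k := by omega
    have h2 : (m + 1) % k < k := Nat.mod_lt _ (by omega)
    have he1 : e = (f^[m] q, f^[(m+1) % k] q) := by
      rw [← hme]
      simp only [cycleEdges, List.getElem_zip, List.getElem_rotate, hlen, hc,
        List.getElem_map, List.getElem_range, List.length_map, List.length_range]
    have hstep : f^[(m+1) % k] q = f (f^[m] q) := by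
      rcases Nat.lt_or_ge (m+1) k with h | h
      · rw [Nat.mod_eq_of_lt h, Function.iterate_succ_apply']
      · have hmk1 : m + 1 = k := by omega
        rw [hmk1, Nat.mod_self]
        simp only [Function.iterate_zero, id_eq]
        rw [← Function.iterate_succ_apply' f m q, Nat.succ_eq_add_one, hmk1]
        exact hqk.symm
    rw [he1, hstep]
    exact hA1 _
  refine ⟨c, ⟨hcne, fun e he => by rw [hedge e he]; norm_num⟩, ?_, ?_⟩
  · unfold cycleGeoMean
    have hp : ((cycleEdges c).map fun e => A e.1 e.2).prod = 1 := by
      apply List.prod_eq_one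
      intro x hx
      obtain ⟨e, he, rfl⟩ := List.mem_map.mp hx
      exact hedge e he
    rw [hp, Real.one_rpow]
  · exact List.mem_map.mpr ⟨0, List.mem_range.mpr (by omega), by simp⟩

/-- if `A` is irreducible max-stochastic, then for every `j`,
`min_{1 ≤ i ≤ n} a*_{ij} = min_{q ∈ N^C(A)} a*_{qj}`. -/
theorem stmt_12 {n : ℕ} (A : Matrix (Fin n) (Fin n) ℝ)
    (hnn : ∀ i j, 0 ≤ A i j) (hirr : IrreducibleMat A) (hms : MaxStochastic A)
    (S : Matrix (Fin n) (Fin n) ℝ) (hS : IsKleeneStar A S) (j : Fin n) :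
    sInf (Set.range fun i => S i j) = sInf {x | ∃ q, CriticalNode A q ∧ x = S q j} := by
  obtain ⟨hSdiag, hSoff⟩ := hS
  have hle1 : ∀ a b, A a b ≤ 1 := fun a b => (hms a).2 (Set.mem_range_self b)
  have hpw : ∀ P : List (Fin n), 0 ≤ pathWeight A P ∧ pathWeight A P ≤ 1 := by
    intro P
    unfold pathWeight
    apply list_prod_mem01
    intro x hx
    obtain ⟨e, -, rfl⟩ := List.mem_map.mp hx
    exact ⟨hnn _ _, hle1 _ _⟩
  have hBdd : ∀ a b : Fin n,
      BddAbove (insert (0:ℝ) {x | ∃ P, IsPathIn A a b P ∧ x = pathWeight A P}) := by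
    intro a b
    refine ⟨1, ?_⟩
    intro x hx
    rcases Set.mem_insert_iff.mp hx with rfl | ⟨P, -, rfl⟩
    · exact zero_le_one
    · exact (hpw P).2
  have hS0 : ∀ a, 0 ≤ S a j := by
    intro a
    by_cases h : a = j
    · subst h; rw [hSdiag]; norm_num
    · rw [hSoff a j h]; exact le_csSup (hBdd a j) (Set.mem_insert 0 _)
  -- choose a weight-one successor for every node
  have hf : ∀ a : Fin n, ∃ b, A a b = 1 := fun a => (hms a).1
  choose f hA1 using hf
  -- key: from every node there is a critical node with smaller star entry
  have key : ∀ i : Fin n, ∃ q, CriticalNode A q ∧ S q j ≤ S i j := by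
    intro i
    obtain ⟨a, b, hab, hiter⟩ : ∃ a b : ℕ, a < b ∧ f^[a] i = f^[b] i := by
      obtain ⟨u, v, huv, he⟩ :=
        Fintype.exists_ne_map_eq_of_card_lt (fun m : Fin (n+1) => f^[(m:ℕ)] i) (by simp)
      have hne : (u : ℕ) ≠ v := fun h => huv (Fin.val_injective h)
      rcases hne.lt_or_gt with h | h
      · exact ⟨u, v, h, he⟩
      · exact ⟨v, u, h, he.symm⟩
    have hqk : f^[b - a] (f^[a] i) = f^[a] i := by
      calc f^[b - a] (f^[a] i) = f^[(b - a) + a] i := (Function.iterate_add_apply f _ a i).symm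
        _ = f^[b] i := by congr 1; omega
        _ = f^[a] i := hiter.symm
    have hcrit : CriticalNode A (f^[a] i) :=
      iter_cycle A f hA1 (f^[a] i) (b - a) (by omega) hqk
    refine ⟨f^[a] i, hcrit, ?_⟩
    rcases Nat.eq_zero_or_pos a with rfl | hap
    · simp
    · obtain ⟨hP, hPw⟩ := iter_path A f hA1 i a hap
      set P : List (Fin n) := (List.range (a+1)).map (fun t => f^[t] i) with hPdef
      set q : Fin n := f^[a] i with hqdef
      by_cases hiq : i = q
      · rw [hiq]
      · by_cases hqj : q = j
        · rw [hqj, hSdiag]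
          by_cases hij : i = j
          · rw [hij, hSdiag]
          · rw [hSoff i j hij]
            refine le_csSup (hBdd i j) (Set.mem_insert_iff.mpr (Or.inr ⟨P, ?_, hPw.symm⟩))
            rw [← hqj]; exact hP
        · rw [hSoff q j hqj]
          apply csSup_le ⟨0, Set.mem_insert 0 _⟩
          intro x hx
          rcases Set.mem_insert_iff.mp hx with rfl | ⟨Q, hQ, rfl⟩
          · exact hS0 i
          · by_cases hij : i = j
            · rw [hij, hSdiag]; exact (hpw Q).2
            · obtain ⟨hPQ, hw⟩ := isPathIn_append A hP hQ
              have hw1 : pathWeight A (P ++ Q.tail) = pathWeight A Q := by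
                rw [hw, hPw, one_mul]
              rw [hSoff i j hij]
              exact le_csSup (hBdd i j)
                (Set.mem_insert_iff.mpr (Or.inr ⟨P ++ Q.tail, hPQ, hw1.symm⟩))
  have hbbR : BddBelow (Set.range fun i => S i j) := by
    refine ⟨0, ?_⟩; rintro x ⟨i, rfl⟩; exact hS0 i
  have hbbC : BddBelow {x | ∃ q, CriticalNode A q ∧ x = S q j} := by
    refine ⟨0, ?_⟩; rintro x ⟨q, -, rfl⟩; exact hS0 q
  have hneC : {x | ∃ q, CriticalNode A q ∧ x = S q j}.Nonempty := by
    obtain ⟨q, hq, -⟩ := key j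
    exact ⟨S q j, q, hq, rfl⟩
  have hsub : {x | ∃ q, CriticalNode A q ∧ x = S q j} ⊆ Set.range fun i => S i j := by
    rintro x ⟨q, -, rfl⟩; exact ⟨q, rfl⟩
  apply le_antisymm
  · exact csInf_le_csInf hbbR hneC hsub
  · refine le_csInf ⟨S j j, ⟨j, rfl⟩⟩ ?_
    rintro x ⟨i, rfl⟩
    obtain ⟨q, hq, hle⟩ := key i
    exact le_trans (csInf_le hbbC ⟨q, hq, rfl⟩) hle
end

section
/- Let A be an n×n irreducible max-stochastic matrix with nonnegative real entries, and let l be a node that is not a critical node of A. Then there exists a critical node k of A and a directed path in D(A) from l to k all of whose edges have weight 1 (so the path has weight 1). -/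
open scoped Classical

/-- if `A` is irreducible max-stochastic and `l` is a non-critical
node, then there is a critical node `k` and a directed path in `D(A)` from `l` to `k`
all of whose edges have weight `1`. -/
theorem stmt_13 {n : ℕ} (A : Matrix (Fin n) (Fin n) ℝ)
    (hnn : ∀ i j, 0 ≤ A i j) (hirr : IrreducibleMat A) (hms : MaxStochastic A)
    (l : Fin n) (hl : ¬ CriticalNode A l) :
    ∃ k : Fin n, CriticalNode A k ∧ ∃ P : List (Fin n),
      IsPathIn A l k P ∧ ∀ e ∈ pathEdges P, A e.1 e.2 = 1 := by
  classical
  choose f hf using fun i => (hms i).1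
  set g : ℕ → Fin n := fun t => f^[t] l with hgdef
  have hg1 : ∀ t, g (t + 1) = f (g t) := fun t => Function.iterate_succ_apply' f t l
  -- pigeonhole
  obtain ⟨a₀, b₀, hne, heq⟩ := Finite.exists_ne_map_eq_of_infinite g
  have hex : ∃ t, ∃ s, t < s ∧ g s = g t := by
    rcases hne.lt_or_gt with h | h
    · exact ⟨a₀, b₀, h, heq.symm⟩
    · exact ⟨b₀, a₀, h, heq⟩
  set a := Nat.find hex with hadef
  obtain ⟨s, has, hgs⟩ := Nat.find_spec hex
  set m := s - a with hmdef
  have hm1 : 1 ≤ m := by omega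
  set x := g a with hxdef
  have hx : f^[m] x = x := by
    have : m + a = s := by omega
    calc f^[m] (f^[a] l) = f^[m + a] l := (Function.iterate_add_apply f m a l).symm
    _ = g s := by rw [this]
    _ = x := hgs
  set cy : List (Fin n) := (List.range m).map (fun t => f^[t] x) with hcydef
  have hcylen : cy.length = m := by simp [hcydef]
  have hcyget : ∀ i (h : i < m), cy[i]'(by omega) = f^[i] x := by
    intro i h
    simp [hcydef]
  have hcedge : ∀ e ∈ cycleEdges cy, A e.1 e.2 = 1 := by
    intro e he
    rw [cycleEdges, List.mem_iff_getElem] at he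
    obtain ⟨i, hi, hei⟩ := he
    have hi' : i < m := by
      simpa [List.length_zip, hcylen] using hi
    rw [List.getElem_zip] at hei
    rw [List.getElem_rotate] at hei
    have h1 : cy[i]'(by omega) = f^[i] x := hcyget i hi'
    have h2 : cy[(i + 1) % cy.length]'(by
        exact Nat.mod_lt _ (by omega)) = f^[i + 1] x := by
      rcases Nat.lt_or_ge (i + 1) m with h | h
      · have : (i + 1) % cy.length = i + 1 := by rw [hcylen]; exact Nat.mod_eq_of_lt h
        simp only [this]
        exact hcyget (i + 1) h
      · have him : i + 1 = m := by omega
        have : (i + 1) % cy.length = 0 := by rw [hcylen, him, Nat.mod_self]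
        simp only [this]
        rw [hcyget 0 (by omega)]
        rw [him, Function.iterate_zero_apply, hx]
    rw [h1, h2] at hei
    rw [← hei]
    have : f^[i + 1] x = f (f^[i] x) := Function.iterate_succ_apply' f i x
    rw [this]
    exact hf _
  have hccyc : IsCycleIn A cy := by
    refine ⟨?_, fun e he => ?_⟩
    · intro h; rw [h] at hcylen; simp at hcylen; omega
    · rw [hcedge e he]; norm_num
  have hcmean : cycleGeoMean A cy = 1 := by
    rw [cycleGeoMean]
    have : ((cycleEdges cy).map fun e => A e.1 e.2).prod = 1 :=
      List.prod_eq_one (by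
        intro y hy
        rw [List.mem_map] at hy
        obtain ⟨e, he, hey⟩ := hy
        rw [← hey]; exact hcedge e he)
    rw [this, Real.one_rpow]
  have hcrit : ∀ v ∈ cy, CriticalNode A v := fun v hv => ⟨cy, hccyc, hcmean, hv⟩
  have hxc : x ∈ cy := by
    rw [hcydef, List.mem_map]
    exact ⟨0, by simp [List.mem_range]; omega, by simp⟩
  have ha1 : 1 ≤ a := by
    by_contra h
    push_neg at h
    have ha0 : a = 0 := by omega
    have hx0 : x = l := by rw [hxdef, ha0]; simp [hgdef]
    exact hl (hx0 ▸ hcrit x hxc)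
  have hedge : ∀ e ∈ pathEdges ((List.range (a + 1)).map g), A e.1 e.2 = 1 := by
    intro e he
    rw [pathEdges, List.mem_iff_getElem] at he
    obtain ⟨i, hi, hei⟩ := he
    have hlen : ((List.range (a + 1)).map g).length = a + 1 := by simp
    have hi' : i < a := by
      simpa [List.length_zip, List.length_tail, hlen] using hi
    rw [List.getElem_zip, List.getElem_tail] at hei
    have h1 : ((List.range (a + 1)).map g)[i]'(by simp; omega) = g i := by simp
    have h2 : ((List.range (a + 1)).map g)[i + 1]'(by simp; omega) = g (i + 1) := by simp
    rw [h1, h2] at hei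
    rw [← hei, hg1 i]
    exact hf _
  refine ⟨x, hcrit x hxc, (List.range (a + 1)).map g,
    ⟨?_, ?_, ?_, fun e he => by rw [hedge e he]; norm_num⟩, hedge⟩
  · rw [List.range_succ_eq_map]
    simp [hgdef]
  · rw [List.range_succ, List.map_append]
    simp [List.getLast?_concat, hxdef]
  · simp; omega
end

section
/- Let A be an n×n irreducible max-stochastic matrix with nonnegative real entries such that the critical graph D^C(A) is strongly connected. Let w be the maximal RST vector of A. Then w_i = 1 for every critical node i ∈ N^C(A). -/
open scoped Classical

private lemma list_prod_pos_le_one (l : List ℝ) (h : ∀ x ∈ l, 0 < x ∧ x ≤ 1) :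
    0 < l.prod ∧ l.prod ≤ 1 := by
  induction l with
  | nil => simp
  | cons a t ih =>
    obtain ⟨ha, ha1⟩ := h a (by simp)
    obtain ⟨hp, hp1⟩ := ih (fun x hx => h x (by simp [hx]))
    refine ⟨by simpa using mul_pos ha hp, ?_⟩
    simp only [List.prod_cons]
    nlinarith

private lemma list_prod_one_all_one (l : List ℝ) (h : ∀ x ∈ l, 0 < x ∧ x ≤ 1)
    (hp : l.prod = 1) : ∀ x ∈ l, x = 1 := by
  induction l with
  | nil => simp
  | cons a t ih =>
    obtain ⟨ha, ha1⟩ := h a (by simp)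
    obtain ⟨htp, htp1⟩ := list_prod_pos_le_one t (fun x hx => h x (by simp [hx]))
    simp only [List.prod_cons] at hp
    have ha' : a = 1 := by nlinarith
    have htp' : t.prod = 1 := by nlinarith
    intro x hx
    rcases List.mem_cons.1 hx with rfl | hx
    · exact ha'
    · exact ih (fun y hy => h y (by simp [hy])) htp' x hx

private lemma criticalEdge_eq_one {n : ℕ} {A : Matrix (Fin n) (Fin n) ℝ}
    (hle : ∀ i j, A i j ≤ 1) {a b : Fin n} (h : CriticalEdge A a b) : A a b = 1 := by
  obtain ⟨c, ⟨hne, hpos⟩, hgeo, hmem⟩ := h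
  set l := (cycleEdges c).map (fun e => A e.1 e.2) with hl
  have hall : ∀ x ∈ l, 0 < x ∧ x ≤ 1 := by
    intro x hx
    obtain ⟨e, he, rfl⟩ := List.mem_map.1 hx
    exact ⟨hpos e he, hle _ _⟩
  have hlen : (c.length : ℝ) ≠ 0 := by
    simp only [ne_eq, Nat.cast_eq_zero, List.length_eq_zero_iff]
    exact hne
  have hprod : l.prod = 1 := by
    have h2 := congrArg (fun x : ℝ => x ^ (c.length : ℝ)) hgeo
    simp only [cycleGeoMean, ← hl] at h2
    rwa [Real.rpow_inv_rpow (le_of_lt (list_prod_pos_le_one l hall).1) hlen,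
      Real.one_rpow] at h2
  exact list_prod_one_all_one l hall hprod _ (List.mem_map_of_mem (f := fun e => A e.1 e.2) hmem)

private lemma exists_critical_reach {n : ℕ} {A : Matrix (Fin n) (Fin n) ℝ}
    (f : Fin n → Fin n) (hf : ∀ x, A x (f x) = 1) (j : Fin n) :
    ∃ v, CriticalNode A v ∧ Relation.ReflTransGen (fun a b : Fin n => A a b = 1) j v := by
  have hreach : ∀ (m : ℕ) (x : Fin n),
      Relation.ReflTransGen (fun a b : Fin n => A a b = 1) x (f^[m] x) := by
    intro m x
    induction m with
    | zero => exact Relation.ReflTransGen.refl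
    | succ m ih =>
      rw [Function.iterate_succ_apply']
      exact Relation.ReflTransGen.tail ih (hf _)
  obtain ⟨x, y, hxy, hfe⟩ := Fintype.exists_ne_map_eq_of_card_lt
    (fun k : Fin (n+1) => f^[(k : ℕ)] j) (by simp)
  have key : ∀ a b : ℕ, a < b → f^[a] j = f^[b] j →
      ∃ v, CriticalNode A v ∧ Relation.ReflTransGen (fun a b : Fin n => A a b = 1) j v := by
    intro a b hab heq
    set v := f^[a] j with hv
    set p := b - a with hpdef
    have hp : 0 < p := by omega
    have hpv : f^[p] v = v := by
      rw [hv, ← Function.iterate_add_apply, hpdef]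
      rw [show b - a + a = b by omega]
      exact heq.symm
    set L : List (Fin n) := (List.range p).map (fun k => f^[k] v) with hc
    have hclen : L.length = p := by simp [hc]
    have hcne : L ≠ [] := by
      intro h0
      rw [h0] at hclen
      simp at hclen
      omega
    have hcget : ∀ (k : ℕ) (hk : k < L.length), L[k] = f^[k] v := by
      intro k hk
      simp [hc]
    have hedge : ∀ e ∈ cycleEdges L, A e.1 e.2 = 1 := by
      intro e he
      obtain ⟨k, hk, hke⟩ := List.mem_iff_getElem.1 he
      have hk1 : k < L.length := by
        simpa [cycleEdges, Nat.lt_min] using hk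
      have hk2 : k < (L.rotate 1).length := by simpa using hk1
      have hzip : (cycleEdges L)[k] = (L[k]'hk1, (L.rotate 1)[k]'hk2) := by
        simp [cycleEdges, List.getElem_zip]
      have hrot : (L.rotate 1)[k]'hk2 = L[(k + 1) % L.length]'(by
          exact Nat.mod_lt _ (by omega)) := by
        simp [List.getElem_rotate]
      have h2 : L[(k + 1) % L.length]'(Nat.mod_lt _ (by omega)) = f (f^[k] v) := by
        rw [hcget _ _]
        rw [hclen] at hk1 ⊢
        by_cases hkp : k + 1 < p
        · rw [Nat.mod_eq_of_lt hkp, Function.iterate_succ_apply']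
        · have : k + 1 = p := by omega
          rw [this, Nat.mod_self]
          have : f^[p] v = f (f^[k] v) := by
            rw [← this]
            exact Function.iterate_succ_apply' f k v
          simp [← this, hpv]
      have he1 : e.1 = f^[k] v := by
        rw [← hke, hzip]
        exact hcget k hk1
      have he2 : e.2 = f (f^[k] v) := by
        rw [← hke, hzip]
        simp only
        rw [hrot, h2]
      rw [he1, he2]
      exact hf _
    have hcyc : IsCycleIn A L := ⟨hcne, fun e he => by rw [hedge e he]; exact one_pos⟩
    have hgeo : cycleGeoMean A L = 1 := by
      unfold cycleGeoMean
      have : ((cycleEdges L).map fun e => A e.1 e.2).prod = 1 := by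
        apply List.prod_eq_one
        intro x hx
        obtain ⟨e, he, rfl⟩ := List.mem_map.1 hx
        exact hedge e he
      rw [this, Real.one_rpow]
    have hvmem : v ∈ L := by
      rw [hc]
      exact List.mem_map.2 ⟨0, List.mem_range.2 hp, rfl⟩
    exact ⟨v, ⟨L, hcyc, hgeo, hvmem⟩, hreach a j⟩
  rcases lt_or_gt_of_ne (fun h : (x : ℕ) = (y : ℕ) => hxy (Fin.ext h)) with h | h
  · exact key x y h hfe
  · exact key y x h hfe.symm

private def chainTo {α : Type*} (R : α → α → Prop) (i : α) : ℕ → α → Prop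
  | 0, j => j = i
  | (k+1), j => ∃ c, R j c ∧ chainTo R i k c

private lemma chainTo_of_reflTransGen {α : Type*} {R : α → α → Prop} {i j : α}
    (h : Relation.ReflTransGen R j i) : ∃ k, chainTo R i k j := by
  induction h using Relation.ReflTransGen.head_induction_on with
  | refl => exact ⟨0, rfl⟩
  | head hab _ ih =>
    obtain ⟨k, hk⟩ := ih
    exact ⟨k + 1, _, hab, hk⟩

/-- if `A` is irreducible max-stochastic, its critical graph
`D^C(A)` is strongly connected, and `w` is the maximal RST vector of `A`, then
`wᵢ = 1` for every critical node `i`. -/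
theorem stmt_14 {n : ℕ} (A : Matrix (Fin n) (Fin n) ℝ)
    (hnn : ∀ i j, 0 ≤ A i j) (hirr : IrreducibleMat A) (hms : MaxStochastic A)
    (hcc : ∀ i j, CriticalNode A i → CriticalNode A j →
      Relation.ReflTransGen (CriticalEdge A) i j)
    (w : Fin n → ℝ) (hw : IsMaxRSTVector A w) :
    ∀ i, CriticalNode A i → w i = 1 := by
  
  intro i hi
  have hle : ∀ a b, A a b ≤ 1 := fun a b => (hms a).2 ⟨b, rfl⟩
  have hex : ∀ x : Fin n, ∃ y, A x y = 1 := fun x => (hms x).1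
  choose f hf using hex
  have hreachall : ∀ j : Fin n, Relation.ReflTransGen (fun a b : Fin n => A a b = 1) j i := by
    intro j
    obtain ⟨v, hv, hjv⟩ := exists_critical_reach f hf j
    exact hjv.trans (Relation.ReflTransGen.mono
      (fun a b h => criticalEdge_eq_one hle h) _ _ (hcc v i hv hi))
  have hchain : ∀ j : Fin n, ∃ k, chainTo (fun a b : Fin n => A a b = 1) i k j :=
    fun j => chainTo_of_reflTransGen (hreachall j)
  set d : Fin n → ℕ := fun j => Nat.find (hchain j) with hd
  have hstep : ∀ j : Fin n, j ≠ i → ∃ c, A j c = 1 ∧ d c < d j := by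
    intro j hj
    have hspec : chainTo (fun a b : Fin n => A a b = 1) i (d j) j := Nat.find_spec (hchain j)
    have hd0 : d j ≠ 0 := by
      intro h0
      rw [h0] at hspec
      exact hj hspec
    obtain ⟨k, hk⟩ := Nat.exists_eq_succ_of_ne_zero hd0
    rw [hk] at hspec
    obtain ⟨c, hc, hck⟩ := hspec
    exact ⟨c, hc, lt_of_le_of_lt (Nat.find_min' (hchain c) hck) (by omega)⟩
  have hstep' : ∀ j : Fin n, ∃ c, j ≠ i → A j c = 1 ∧ d c < d j := by
    intro j
    by_cases h : j = i
    · exact ⟨i, fun h' => absurd h h'⟩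
    · obtain ⟨c, hc⟩ := hstep j h
      exact ⟨c, fun _ => hc⟩
  choose g hg using hstep'
  set T : Finset (Fin n × Fin n) :=
    Finset.univ.filter (fun e : Fin n × Fin n => e.1 ≠ i ∧ e.2 = g e.1) with hT
  have hmemT : ∀ e : Fin n × Fin n, e ∈ T ↔ e.1 ≠ i ∧ e.2 = g e.1 := by
    intro e
    simp [hT]
  have htree : IsITree (edgeRel A) i T := by
    refine ⟨?_, ?_, ?_, ?_⟩
    · intro e he
      obtain ⟨h1, h2⟩ := (hmemT e).1 he
      show 0 < A e.1 e.2
      rw [h2, (hg e.1 h1).1]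
      exact one_pos
    · intro j hj
      refine ⟨g j, (hmemT (j, g j)).2 ⟨hj, rfl⟩, fun y hy => ((hmemT (j, y)).1 hy).2⟩
    · intro k hk
      exact ((hmemT (i, k)).1 hk).1 rfl
    · intro j hcyc
      have key : ∀ x y : Fin n, Relation.TransGen (fun a b => (a, b) ∈ T) x y → d y < d x := by
        intro x y h
        induction h with
        | single h =>
          obtain ⟨h1, h2⟩ := (hmemT _).1 h
          simp only at h2
          rw [h2]
          exact (hg _ h1).2
        | tail _ h ih =>
          obtain ⟨h1, h2⟩ := (hmemT _).1 h
          simp only at h2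
          refine lt_trans ?_ ih
          rw [h2]
          exact (hg _ h1).2
      exact lt_irrefl _ (key j j hcyc)
  have hwT : treeWeight A T = 1 := by
    apply Finset.prod_eq_one
    intro e he
    obtain ⟨h1, h2⟩ := (hmemT e).1 he
    rw [h2]
    exact (hg e.1 h1).1
  have h1le : (1 : ℝ) ≤ w i := (hw i).2 ⟨T, htree, hwT.symm⟩
  have hwle : w i ≤ 1 := by
    obtain ⟨T', hT', hwe⟩ := (hw i).1
    rw [hwe]
    exact Finset.prod_le_one (fun e _ => hnn _ _) (fun e _ => hle _ _)
  linarith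
end

section
/- Let A be an n×n irreducible max-stochastic matrix with nonnegative real entries and w its maximal RST vector. Then for every j ∈ {1,…,n}, w_j ≤ min_{i ∈ N^C(A)} a*_{ij}, where A* is the Kleene star of A and N^C(A) is the set of critical nodes of A. -/
open scoped Classical

private lemma list_prod_le_one' (l : List ℝ) (h0 : ∀ x ∈ l, 0 ≤ x) (h1 : ∀ x ∈ l, x ≤ 1) :
    l.prod ≤ 1 := by
  induction l with
  | nil => simp
  | cons a t ih =>
    simp only [List.prod_cons]
    have ht0 : 0 ≤ t.prod := List.prod_nonneg fun x hx => h0 x (List.mem_cons_of_mem _ hx)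
    calc a * t.prod ≤ 1 * 1 := by
          apply mul_le_mul (h1 a List.mem_cons_self)
            (ih (fun x hx => h0 x (List.mem_cons_of_mem _ hx))
                (fun x hx => h1 x (List.mem_cons_of_mem _ hx))) ht0 zero_le_one
      _ = 1 := by ring

/-- if `A` is irreducible max-stochastic with maximal RST vector
`w`, then `wⱼ ≤ min_{i ∈ N^C(A)} a*_{ij}` for every `j`. -/
theorem stmt_15 {n : ℕ} (A : Matrix (Fin n) (Fin n) ℝ)
    (hnn : ∀ i j, 0 ≤ A i j) (hirr : IrreducibleMat A) (hms : MaxStochastic A)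
    (w : Fin n → ℝ) (hw : IsMaxRSTVector A w)
    (S : Matrix (Fin n) (Fin n) ℝ) (hS : IsKleeneStar A S) :
    ∀ j : Fin n, ∀ i : Fin n, CriticalNode A i → w j ≤ S i j := by
  intro j i _hi
  have hle1 : ∀ a b, A a b ≤ 1 := fun a b => (hms a).2 ⟨b, rfl⟩
  obtain ⟨T, hT, hwT⟩ := (hw j).1
  have hTpos : ∀ e ∈ T, 0 < A e.1 e.2 := hT.1
  by_cases hij : i = j
  · subst hij
    rw [hwT]
    calc treeWeight A T ≤ 1 :=
          Finset.prod_le_one (fun e he => le_of_lt (hTpos e he)) (fun e _ => hle1 _ _)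
      _ = S i i := (hS.1 i).symm
  · -- step relation inside the tree
    have hirrfl : ∀ v : Fin n, ¬ Relation.TransGen (fun a b => (a, b) ∈ T) v v := hT.2.2.2
    have hwf : WellFounded (fun k v : Fin n => (v, k) ∈ T) := by
      have htr : WellFounded (Relation.TransGen (fun k v : Fin n => (v, k) ∈ T)) := by
        haveI : IsTrans (Fin n) (Relation.TransGen (fun k v : Fin n => (v, k) ∈ T)) :=
          ⟨fun _ _ _ => Relation.TransGen.trans⟩
        haveI : IsIrrefl (Fin n) (Relation.TransGen (fun k v : Fin n => (v, k) ∈ T)) := by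
          constructor
          intro v hv
          exact hirrfl v ((Relation.transGen_swap
            (r := fun a b : Fin n => (a, b) ∈ T) (a := v) (b := v)).mp hv)
        exact Finite.wellFounded_of_trans_of_irrefl _
      exact Subrelation.wf (fun h => Relation.TransGen.single h) htr
    have key : ∀ v : Fin n, ∃ P : List (Fin n),
        P.head? = some v ∧ P.getLast? = some j ∧
        (∀ e ∈ pathEdges P, e ∈ T) ∧ (pathEdges P).Nodup ∧
        (∀ u ∈ P, Relation.ReflTransGen (fun a b => (a, b) ∈ T) v u) := by
      intro v
      induction v using hwf.induction with
      | _ v ih =>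
        by_cases hvj : v = j
        · refine ⟨[v], rfl, by simp [hvj], ?_, ?_, ?_⟩
          · simp [pathEdges]
          · simp [pathEdges]
          · intro u hu
            simp only [List.mem_singleton] at hu
            subst hu; exact Relation.ReflTransGen.refl
        · obtain ⟨k, hk, -⟩ := hT.2.1 v hvj
          obtain ⟨P, hh, hl, hsub, hnd, hreach⟩ := ih k hk
          obtain ⟨k', P', rfl⟩ : ∃ k' P', P = k' :: P' := by
            cases P with
            | nil => simp at hh
            | cons a b => exact ⟨a, b, rfl⟩
          have hk' : k' = k := by simpa using hh
          subst hk'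
          have hzip : pathEdges (v :: k' :: P') = (v, k') :: pathEdges (k' :: P') := by
            simp [pathEdges]
          refine ⟨v :: k' :: P', rfl, ?_, ?_, ?_, ?_⟩
          · rw [List.getLast?_cons_cons]; exact hl
          · intro e he
            rw [hzip] at he
            rcases List.mem_cons.mp he with h | h
            · subst h; exact hk
            · exact hsub e h
          · rw [hzip]
            refine List.nodup_cons.mpr ⟨?_, hnd⟩
            intro hmem
            have hv : v ∈ (k' :: P') := (List.of_mem_zip hmem).1
            exact hirrfl v (Relation.TransGen.head' hk (hreach v hv))
          · intro u hu
            rcases List.mem_cons.mp hu with h | h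
            · subst h; exact Relation.ReflTransGen.refl
            · exact Relation.ReflTransGen.head hk (hreach u h)
    obtain ⟨P, hh, hl, hsub, hnd, -⟩ := key i
    -- P is a genuine path from i to j
    have hlen : 2 ≤ P.length := by
      cases P with
      | nil => simp at hh
      | cons x Q =>
        cases Q with
        | nil =>
          exfalso; apply hij
          have h1 : x = i := by simpa using hh
          have h2 : x = j := by simpa using hl
          rw [← h1, ← h2]
        | cons y Q' => simp
    have hpath : IsPathIn A i j P := ⟨hh, hl, hlen, fun e he => hT.1 e (hsub e he)⟩
    -- bound sSup
    have hSij := hS.2 i j hij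
    have hbdd : BddAbove (insert (0 : ℝ)
        {x | ∃ Q, IsPathIn A i j Q ∧ x = pathWeight A Q}) := by
      refine ⟨1, ?_⟩
      rintro x (rfl | ⟨Q, hQ, rfl⟩)
      · exact zero_le_one
      · apply list_prod_le_one'
        · intro y hy
          obtain ⟨e, -, rfl⟩ := List.mem_map.mp hy
          exact hnn _ _
        · intro y hy
          obtain ⟨e, -, rfl⟩ := List.mem_map.mp hy
          exact hle1 _ _
    have h1 : pathWeight A P ≤ S i j := by
      rw [hSij]
      exact le_csSup hbdd (Set.mem_insert_iff.mpr (Or.inr ⟨P, hpath, rfl⟩))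
    have h2 : w j ≤ pathWeight A P := by
      rw [hwT]
      have hEsub : (pathEdges P).toFinset ⊆ T := fun e he => hsub e (List.mem_toFinset.mp he)
      have hsd := Finset.prod_sdiff (f := fun e : Fin n × Fin n => A e.1 e.2) hEsub
      have hpw : pathWeight A P = ∏ e ∈ (pathEdges P).toFinset, A e.1 e.2 :=
        (List.prod_toFinset _ hnd).symm
      have h3 : (∏ e ∈ T \ (pathEdges P).toFinset, A e.1 e.2) ≤ 1 :=
        Finset.prod_le_one (fun e he => le_of_lt (hTpos e (Finset.mem_sdiff.mp he).1))
          (fun e _ => hle1 _ _)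
      have h4 : 0 ≤ ∏ e ∈ (pathEdges P).toFinset, A e.1 e.2 :=
        Finset.prod_nonneg fun e _ => hnn _ _
      calc treeWeight A T
          = (∏ e ∈ T \ (pathEdges P).toFinset, A e.1 e.2) *
            ∏ e ∈ (pathEdges P).toFinset, A e.1 e.2 := hsd.symm
        _ ≤ 1 * ∏ e ∈ (pathEdges P).toFinset, A e.1 e.2 := by
            exact mul_le_mul_of_nonneg_right h3 h4
        _ = pathWeight A P := by rw [one_mul, ← hpw]
    exact h2.trans h1
end

section
/- Let A be an n×n irreducible max-stochastic matrix with nonnegative real entries whose critical graph D^C(A) is strongly connected, and let w be the maximal RST vector of A. Then for every j ∈ {1,…,n}, w_j = min_{i ∈ N^C(A)} a*_{ij}, where A* is the Kleene star of A and N^C(A) is the set of critical nodes of A. -/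
open scoped Classical

namespace Aux16

-- generic list lemmas
lemma list_prod_le_one {l : List ℝ} (h : ∀ x ∈ l, 0 ≤ x ∧ x ≤ 1) :
    0 ≤ l.prod ∧ l.prod ≤ 1 := by
  induction l with
  | nil => simp
  | cons a t ih =>
    have ha := h a (by simp)
    have ht := ih (fun x hx => h x (by simp [hx]))
    simp only [List.prod_cons]
    constructor
    · exact mul_nonneg ha.1 ht.1
    · calc a * t.prod ≤ 1 * 1 := by
            apply mul_le_mul ha.2 ht.2 ht.1 zero_le_one
        _ = 1 := by ring

lemma pathEdges_cons_cons {n : ℕ} (a b : Fin n) (l : List (Fin n)) :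
    pathEdges (a :: b :: l) = (a, b) :: pathEdges (b :: l) := by
  simp [pathEdges]

lemma pathWeight_cons_cons {n : ℕ} (A : Matrix (Fin n) (Fin n) ℝ) (a b : Fin n)
    (l : List (Fin n)) :
    pathWeight A (a :: b :: l) = A a b * pathWeight A (b :: l) := by
  simp [pathWeight, pathEdges_cons_cons]

lemma mem_pathEdges_fst {n : ℕ} {e : Fin n × Fin n} {l : List (Fin n)}
    (h : e ∈ pathEdges l) : e.1 ∈ l ∧ e.2 ∈ l.tail := by
  constructor
  · exact List.of_mem_zip h |>.1
  · exact List.of_mem_zip h |>.2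

-- rank-decreasing implies no cycles
lemma no_cycle_of_rank {n : ℕ} {T : Finset (Fin n × Fin n)} {ρ : Fin n → ℕ}
    (h : ∀ e ∈ T, ρ e.2 < ρ e.1) :
    ∀ j, ¬ Relation.TransGen (fun a b => (a, b) ∈ T) j j := by
  have key : ∀ a b, Relation.TransGen (fun a b => (a, b) ∈ T) a b → ρ b < ρ a := by
    intro a b hab
    induction hab with
    | single h1 => exact h (_, _) h1
    | tail _ h2 ih => exact lt_trans (h (_, _) h2) ih
  intro j hj
  exact lt_irrefl _ (key j j hj)

-- crossing lemma
lemma crossing {α : Type*} {r : α → α → Prop} {P : α → Prop} {k b : α}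
    (h : Relation.ReflTransGen r k b) (hb : P b) (hk : ¬ P k) :
    ∃ x y, r x y ∧ ¬ P x ∧ P y := by
  induction h using Relation.ReflTransGen.head_induction_on with
  | refl => exact absurd hb hk
  | head hxy _ ih =>
    rename_i x y _
    by_cases hy : P y
    · exact ⟨x, y, hxy, hk, hy⟩
    · exact ih hy



variable {n : ℕ} (A : Matrix (Fin n) (Fin n) ℝ)


def Bset (j : Fin n) (T : Finset (Fin n × Fin n)) : Finset (Fin n) :=
  insert j (T.image Prod.fst)

structure Inv (j : Fin n) (T : Finset (Fin n × Fin n)) : Prop where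
  pos : ∀ e ∈ T, 0 < A e.1 e.2
  func : ∀ a b b', (a, b) ∈ T → (a, b') ∈ T → b = b'
  noj : ∀ b, (j, b) ∉ T
  rank : ∃ ρ : Fin n → ℕ, ∀ e ∈ T, ρ e.2 < ρ e.1
  closed : ∀ e ∈ T, e.2 ∈ Bset j T

lemma Inv.empty (j : Fin n) : Inv A j ∅ := by
  refine ⟨?_, ?_, ?_, ⟨fun _ => 0, ?_⟩, ?_⟩ <;> simp

lemma not_source_of_not_mem_Bset {j : Fin n} {T : Finset (Fin n × Fin n)} {x b : Fin n}
    (hx : x ∉ Bset j T) (h : (x, b) ∈ T) : False := by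
  apply hx
  exact Finset.mem_insert_of_mem (Finset.mem_image.2 ⟨(x, b), h, rfl⟩)

lemma step {j : Fin n} {T : Finset (Fin n × Fin n)} {x y : Fin n}
    (hI : Inv A j T) (hx : x ∉ Bset j T) (hy : y ∈ Bset j T) (hpos : 0 < A x y) :
    Inv A j (insert (x, y) T) ∧
    treeWeight A (insert (x, y) T) = A x y * treeWeight A T ∧
    Bset j (insert (x, y) T) = insert x (Bset j T) := by
  have hxT : (x, y) ∉ T := fun h => not_source_of_not_mem_Bset hx h
  have hBset : Bset j (insert (x, y) T) = insert x (Bset j T) := by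
    simp only [Bset, Finset.image_insert]
    ext z
    simp only [Finset.mem_insert, Finset.mem_image]
    tauto
  have hxj : x ≠ j := fun h => hx (h ▸ Finset.mem_insert_self _ _)
  refine ⟨⟨?_, ?_, ?_, ?_, ?_⟩, ?_, hBset⟩
  · intro e he
    rcases Finset.mem_insert.1 he with h | h
    · subst h; exact hpos
    · exact hI.pos e h
  · intro a b b' hb hb'
    rcases Finset.mem_insert.1 hb with h | h <;> rcases Finset.mem_insert.1 hb' with h' | h'
    · rw [Prod.mk.injEq] at h h'; rw [h.2, h'.2]
    · exfalso; rw [Prod.mk.injEq] at h; exact not_source_of_not_mem_Bset (h.1 ▸ hx) h'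
    · exfalso; rw [Prod.mk.injEq] at h'; exact not_source_of_not_mem_Bset (h'.1 ▸ hx) h
    · exact hI.func a b b' h h'
  · intro b hb
    rcases Finset.mem_insert.1 hb with h | h
    · rw [Prod.mk.injEq] at h; exact hxj h.1.symm
    · exact hI.noj b h
  · obtain ⟨ρ, hρ⟩ := hI.rank
    refine ⟨Function.update ρ x (ρ y + 1), ?_⟩
    intro e he
    have hyx : y ≠ x := fun h => hx (h ▸ hy)
    rcases Finset.mem_insert.1 he with h | h
    · subst h
      simp only [Function.update_self, Function.update_of_ne hyx]
      omega
    · have h1 : e.1 ≠ x := by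
        intro hh
        refine not_source_of_not_mem_Bset (b := e.2) hx ?_
        rw [← hh]; exact h
      have h2 : e.2 ≠ x := fun hh => hx (hh ▸ hI.closed e h)
      simp only [Function.update_of_ne h1, Function.update_of_ne h2]
      exact hρ e h
  · intro e he
    rw [hBset]
    rcases Finset.mem_insert.1 he with h | h
    · subst h; exact Finset.mem_insert_of_mem hy
    · exact Finset.mem_insert_of_mem (hI.closed e h)
  · rw [treeWeight, Finset.prod_insert hxT]; rfl



variable {n : ℕ} {A : Matrix (Fin n) (Fin n) ℝ}

/-- weight-1 edge relation -/
def w1 (A : Matrix (Fin n) (Fin n) ℝ) : Fin n → Fin n → Prop := fun a b => A a b = 1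


lemma finish {j : Fin n} {T : Finset (Fin n × Fin n)} (hI : Inv A j T)
    (huniv : Bset j T = Finset.univ) : IsITree (edgeRel A) j T := by
  refine ⟨hI.pos, ?_, hI.noj, ?_⟩
  · intro k hk
    have : k ∈ Bset j T := huniv ▸ Finset.mem_univ k
    rcases Finset.mem_insert.1 this with h | h
    · exact absurd h hk
    · obtain ⟨e, he, hfst⟩ := Finset.mem_image.1 h
      refine ⟨e.2, ?_, ?_⟩
      · rw [← hfst]; exact he
      · intro b hb
        exact (hI.func k b e.2 hb (by rw [← hfst]; exact he)).symm ▸ rfl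
  · obtain ⟨ρ, hρ⟩ := hI.rank
    exact no_cycle_of_rank hρ

lemma ext_aux {j : Fin n} :
    ∀ (N : ℕ) (T : Finset (Fin n × Fin n)), Inv A j T →
      (Finset.univ \ Bset j T).card ≤ N →
      (∀ k, ∃ m ∈ Bset j T, Relation.ReflTransGen (w1 A) k m) →
      ∃ T', IsITree (edgeRel A) j T' ∧ treeWeight A T' = treeWeight A T := by
  intro N
  induction N with
  | zero =>
    intro T hI hcard hreach
    refine ⟨T, finish hI ?_, rfl⟩
    have : Finset.univ \ Bset j T = ∅ := Finset.card_eq_zero.1 (Nat.le_zero.1 hcard)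
    rw [Finset.sdiff_eq_empty_iff_subset] at this
    exact (Finset.univ_subset_iff.1 this)
  | succ N ih =>
    intro T hI hcard hreach
    by_cases huniv : Bset j T = Finset.univ
    · exact ⟨T, finish hI huniv, rfl⟩
    · -- pick k outside Bset
      have hne : (Finset.univ \ Bset j T).Nonempty := by
        rw [Finset.sdiff_nonempty]
        intro hsub
        exact huniv (Finset.univ_subset_iff.1 hsub)
      obtain ⟨k, hk⟩ := hne
      have hkB : k ∉ Bset j T := (Finset.mem_sdiff.1 hk).2
      obtain ⟨m, hm, hwalk⟩ := hreach k
      obtain ⟨x, y, hxy, hxB, hyB⟩ :=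
        crossing (P := fun z => z ∈ Bset j T) hwalk hm hkB
      have hpos : 0 < A x y := by rw [hxy]; norm_num
      obtain ⟨hI', hw', hB'⟩ := step A hI hxB hyB hpos
      have hcard' : (Finset.univ \ Bset j (insert (x, y) T)).card ≤ N := by
        rw [hB']
        have : Finset.univ \ insert x (Bset j T) = (Finset.univ \ Bset j T).erase x := by
          ext z
          simp only [Finset.mem_sdiff, Finset.mem_insert, Finset.mem_erase, Finset.mem_univ,
            true_and]
          tauto
        rw [this]
        have hxmem : x ∈ Finset.univ \ Bset j T := Finset.mem_sdiff.2 ⟨Finset.mem_univ x, hxB⟩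
        have := Finset.card_erase_of_mem hxmem
        omega
      have hreach' : ∀ k', ∃ m' ∈ Bset j (insert (x, y) T),
          Relation.ReflTransGen (w1 A) k' m' := by
        intro k'
        obtain ⟨m', hm', hw⟩ := hreach k'
        exact ⟨m', by rw [hB']; exact Finset.mem_insert_of_mem hm', hw⟩
      obtain ⟨T', hT', hwT'⟩ := ih (insert (x, y) T) hI' hcard' hreach'
      refine ⟨T', hT', ?_⟩
      rw [hwT', hw', hxy, one_mul]

lemma pathWeight_nonneg (hnn : ∀ i j, 0 ≤ A i j) (P : List (Fin n)) :
    0 ≤ pathWeight A P := by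
  apply List.prod_nonneg
  intro x hx
  obtain ⟨e, _, rfl⟩ := List.mem_map.1 hx
  exact hnn e.1 e.2

lemma pathWeight_le_one (hnn : ∀ i j, 0 ≤ A i j) (h1 : ∀ i j, A i j ≤ 1)
    (P : List (Fin n)) : pathWeight A P ≤ 1 := by
  refine (list_prod_le_one ?_).2
  intro x hx
  obtain ⟨e, _, rfl⟩ := List.mem_map.1 hx
  exact ⟨hnn e.1 e.2, h1 e.1 e.2⟩

lemma treeWeight_nonneg (hnn : ∀ i j, 0 ≤ A i j) (T : Finset (Fin n × Fin n)) :
    0 ≤ treeWeight A T :=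
  Finset.prod_nonneg fun e _ => hnn e.1 e.2

lemma treeWeight_le_one (hnn : ∀ i j, 0 ≤ A i j) (h1 : ∀ i j, A i j ≤ 1)
    (T : Finset (Fin n × Fin n)) : treeWeight A T ≤ 1 :=
  Finset.prod_le_one (fun e _ => hnn e.1 e.2) (fun e _ => h1 e.1 e.2)

/-- building the partial tree from a (not necessarily simple) path ending at `j`. -/
lemma build (hnn : ∀ i j, 0 ≤ A i j) (h1 : ∀ i j, A i j ≤ 1) {j : Fin n} :
    ∀ (Q : List (Fin n)) (x : Fin n), Q.head? = some x → Q.getLast? = some j →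
      (∀ e ∈ pathEdges Q, 0 < A e.1 e.2) →
      ∃ T0, Inv A j T0 ∧ x ∈ Bset j T0 ∧ pathWeight A Q ≤ treeWeight A T0 := by
  intro Q
  induction Q with
  | nil => intro x hx; simp at hx
  | cons a Q' ih =>
    intro x hx hlast hpos
    have hax : a = x := by simpa using hx
    subst hax
    match Q', hlast with
    | [], hlast =>
      have haj : a = j := by simpa using hlast
      subst haj
      refine ⟨∅, Inv.empty A a, Finset.mem_insert_self _ _, ?_⟩
      simp [pathWeight, pathEdges, treeWeight]
    | q :: R, hlast =>
      have hlast' : (q :: R).getLast? = some j := by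
        rwa [List.getLast?_cons_cons] at hlast
      have hpos' : ∀ e ∈ pathEdges (q :: R), 0 < A e.1 e.2 := by
        intro e he
        exact hpos e (by rw [pathEdges_cons_cons]; exact List.mem_cons_of_mem _ he)
      obtain ⟨T0, hI, hqB, hwB⟩ := ih q rfl hlast' hpos'
      have haq : 0 < A a q := hpos (a, q) (by rw [pathEdges_cons_cons]; exact List.mem_cons_self)
      have hpw : pathWeight A (a :: q :: R) = A a q * pathWeight A (q :: R) :=
        pathWeight_cons_cons A a q R
      by_cases haB : a ∈ Bset j T0
      · refine ⟨T0, hI, haB, ?_⟩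
        rw [hpw]
        calc A a q * pathWeight A (q :: R) ≤ 1 * pathWeight A (q :: R) := by
              apply mul_le_mul_of_nonneg_right (h1 a q) (pathWeight_nonneg hnn _)
          _ = pathWeight A (q :: R) := one_mul _
          _ ≤ treeWeight A T0 := hwB
      · obtain ⟨hI', hw', hB'⟩ := step A hI haB hqB haq
        refine ⟨insert (a, q) T0, hI', by rw [hB']; exact Finset.mem_insert_self _ _, ?_⟩
        rw [hpw, hw']
        exact mul_le_mul_of_nonneg_left hwB (le_of_lt haq)



variable {n : ℕ} {A : Matrix (Fin n) (Fin n) ℝ}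

lemma crit_edge_one (hnn : ∀ i j, 0 ≤ A i j) (h1 : ∀ i j, A i j ≤ 1) {a b : Fin n}
    (h : CriticalEdge A a b) : A a b = 1 := by
  obtain ⟨c, ⟨hne, hpos⟩, hgm, hmem⟩ := h
  set l := (cycleEdges c).map fun e => A e.1 e.2 with hl
  have hlen : 0 < c.length := List.length_pos_iff.2 hne
  have hlpos : 0 < l.prod := by
    apply List.prod_pos
    intro x hx
    obtain ⟨e, he, rfl⟩ := List.mem_map.1 hx
    exact hpos e he
  have hprod1 : l.prod = 1 := by
    have hy : (c.length : ℝ) ≠ 0 := by exact_mod_cast hlen.ne'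
    have := congrArg (fun x : ℝ => x ^ (c.length : ℝ)) hgm
    simp only [cycleGeoMean] at this
    rw [Real.rpow_inv_rpow (le_of_lt hlpos) hy, Real.one_rpow] at this
    exact this
  -- now each element is 1 since all in (0,1]
  have hab : A a b ∈ l := List.mem_map.2 ⟨(a, b), hmem, rfl⟩
  have hrest := List.prod_erase hab
  set r := (l.erase (A a b)).prod with hr
  have hrle : r ≤ 1 := by
    refine (list_prod_le_one ?_).2
    intro x hx
    have hx' : x ∈ l := List.mem_of_mem_erase hx
    obtain ⟨e, he, rfl⟩ := List.mem_map.1 hx'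
    exact ⟨hnn e.1 e.2, h1 e.1 e.2⟩
  have hable : A a b ≤ 1 := h1 a b
  have habpos : 0 < A a b := hpos (a, b) hmem
  nlinarith [hrest, hprod1]

lemma iterate_walk (f : Fin n → Fin n) (hf : ∀ k, A k (f k) = 1) (k : Fin n) :
    ∀ t, Relation.ReflTransGen (w1 A) k (f^[t] k) := by
  intro t
  induction t with
  | zero => exact Relation.ReflTransGen.refl
  | succ t ih =>
    rw [Function.iterate_succ_apply']
    exact Relation.ReflTransGen.tail ih (hf _)

lemma reach_crit (f : Fin n → Fin n) (hf : ∀ k, A k (f k) = 1) (k : Fin n) :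
    ∃ m, CriticalNode A m ∧ Relation.ReflTransGen (w1 A) k m := by
  -- pigeonhole on iterates
  have hninj : ¬ Function.Injective (fun t : Fin (n + 1) => f^[(t : ℕ)] k) := by
    intro hinj
    have := Fintype.card_le_of_injective _ hinj
    simp at this
  obtain ⟨t1, t2, heq, hne12⟩ := Function.not_injective_iff.1 hninj
  wlog hlt : (t2 : ℕ) < (t1 : ℕ) generalizing t1 t2
  · refine this t2 t1 heq.symm (Ne.symm hne12) ?_
    rcases Nat.lt_or_ge (t1 : ℕ) (t2 : ℕ) with h | h
    · exact h
    · exfalso; apply hlt; omega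
  set a := (t2 : ℕ)
  set L := (t1 : ℕ) - (t2 : ℕ) with hL
  have hL1 : 1 ≤ L := by omega
  set x := f^[a] k with hx
  have hcyc : f^[L] x = x := by
    rw [hx, ← Function.iterate_add_apply]
    have : L + a = (t1 : ℕ) := by omega
    rw [this]
    exact heq.symm ▸ rfl
  set cl := (List.range L).map (fun t => f^[t] x) with hc
  have hclen : cl.length = L := by simp [hc]
  have hcne : cl ≠ [] := by
    intro h
    rw [h] at hclen
    simp at hclen
    omega
  have hedge : ∀ e ∈ cycleEdges cl, A e.1 e.2 = 1 := by
    intro e he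
    obtain ⟨t, ht, hget⟩ := List.mem_iff_getElem.1 he
    set r : List (Fin n) := cl.rotate 1 with hrdef
    have hrotlen : r.length = L := by simp [hrdef, hclen]
    have htL : t < L := by
      have hlen2 : (cycleEdges cl).length = L := by
        simp [cycleEdges, List.length_zip, hclen, hrotlen]
      omega
    have htc : t < cl.length := by omega
    have htr : t < r.length := by omega
    have hget1 : (cycleEdges cl)[t]'ht = (cl[t]'htc, r[t]'htr) :=
      List.getElem_zip
    have hct : cl[t]'htc = f^[t] x := by simp [hc]
    have hmodlt : (t + 1) % L < cl.length := by
      rw [hclen]; exact Nat.mod_lt _ (by omega)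
    have hrot : r[t]'htr = cl[(t + 1) % L]'hmodlt := by
      have h2 := List.getElem_rotate cl 1 t htr
      simp only [hclen] at h2
      exact h2
    have hmod : cl[(t + 1) % L]'hmodlt = f (f^[t] x) := by
      have h0 : cl[(t + 1) % L]'hmodlt = f^[(t + 1) % L] x := by simp [hc]
      rw [h0]
      rcases Nat.lt_or_ge (t + 1) L with h | h
      · rw [Nat.mod_eq_of_lt h, Function.iterate_succ_apply']
      · have ht1 : t + 1 = L := by omega
        rw [ht1, Nat.mod_self]
        simp only [Function.iterate_zero_apply]
        calc x = f^[L] x := hcyc.symm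
          _ = f^[t + 1] x := by rw [ht1]
          _ = f (f^[t] x) := Function.iterate_succ_apply' f t x
    rw [← hget, hget1, hct, hrot, hmod]
    exact hf _
  have hcycin : IsCycleIn A cl := by
    refine ⟨hcne, ?_⟩
    intro e he
    rw [hedge e he]
    norm_num
  have hgm : cycleGeoMean A cl = 1 := by
    rw [cycleGeoMean]
    have hpe : ((cycleEdges cl).map fun e => A e.1 e.2).prod = 1 := by
      apply List.prod_eq_one
      intro y hy
      obtain ⟨e, he, rfl⟩ := List.mem_map.1 hy
      exact hedge e he
    rw [hpe, Real.one_rpow]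
  have hmemx : x ∈ cl := by
    rw [hc]
    refine List.mem_map.2 ⟨0, ?_, rfl⟩
    simp
    omega
  exact ⟨x, ⟨cl, hcycin, hgm, hmemx⟩, iterate_walk f hf k a⟩

lemma tree_path {j : Fin n} {T : Finset (Fin n × Fin n)}
    (hT : IsITree (edgeRel A) j T) :
    ∀ k, k ≠ j → ∃ P : List (Fin n), P.head? = some k ∧ P.getLast? = some j ∧
      2 ≤ P.length ∧ (∀ e ∈ pathEdges P, e ∈ T) ∧ P.Nodup := by
  have hacyc := hT.2.2.2
  set rel : Fin n → Fin n → Prop := fun a b => (b, a) ∈ T with hrel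
  have hirr : ∀ a, ¬ Relation.TransGen rel a a := by
    intro a h
    exact hacyc a (Relation.transGen_swap.2 h)
  have hwf : WellFounded rel := by
    have hI : IsIrrefl (Fin n) (Relation.TransGen rel) := ⟨fun a => hirr a⟩
    have hwf' : WellFounded (Relation.TransGen rel) :=
      Finite.wellFounded_of_trans_of_irrefl _
    exact Subrelation.wf (fun h => Relation.TransGen.single h) hwf'
  -- strengthened statement
  suffices H : ∀ k, k ≠ j → ∃ P : List (Fin n), P.head? = some k ∧ P.getLast? = some j ∧
      2 ≤ P.length ∧ (∀ e ∈ pathEdges P, e ∈ T) ∧ P.Nodup ∧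
      (∀ x ∈ P, x = k ∨ Relation.TransGen (fun a b => (a, b) ∈ T) k x) by
    intro k hk
    obtain ⟨P, h1, h2, h3, h4, h5, _⟩ := H k hk
    exact ⟨P, h1, h2, h3, h4, h5⟩
  intro k
  induction k using WellFounded.induction hwf with
  | _ k ih =>
  intro hkj
  obtain ⟨s, hs, _⟩ := hT.2.1 k hkj
  by_cases hsj : s = j
  · subst hsj
    refine ⟨[k, s], rfl, rfl, by norm_num, ?_, ?_, ?_⟩
    · intro e he
      simp only [pathEdges, List.zip, List.tail] at he
      have : e = (k, s) := by
        simpa [pathEdges] using he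
      rw [this]; exact hs
    · simp [hkj]
    · intro x hx
      rcases List.mem_cons.1 hx with h | h
      · exact Or.inl h
      · have : x = s := by simpa using h
        exact Or.inr (this ▸ Relation.TransGen.single hs)
  · obtain ⟨P', hh, hl, hlen, hed, hnd, hreach⟩ := ih s hs hsj
    match P', hh with
    | s' :: R, hh =>
      have hss : s' = s := by simpa using hh
      subst hss
      have hkn : k ∉ s' :: R := by
        intro hmem
        rcases hreach k hmem with h | h
        · subst h
          exact hacyc k (Relation.TransGen.single hs)
        · exact hacyc k (Relation.TransGen.head hs h)
      refine ⟨k :: s' :: R, rfl, ?_, ?_, ?_, ?_, ?_⟩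
      · rw [List.getLast?_cons_cons]; exact hl
      · simp only [List.length_cons]; omega
      · intro e he
        rw [pathEdges_cons_cons] at he
        rcases List.mem_cons.1 he with h | h
        · rw [h]; exact hs
        · exact hed e h
      · exact List.nodup_cons.2 ⟨hkn, hnd⟩
      · intro x hx
        rcases List.mem_cons.1 hx with h | h
        · exact Or.inl h
        · rcases hreach x h with h' | h'
          · exact Or.inr (h' ▸ Relation.TransGen.single hs)
          · exact Or.inr (Relation.TransGen.head hs h')

lemma nodup_pathEdges : ∀ {P : List (Fin n)}, P.Nodup → (pathEdges P).Nodup := by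
  intro P
  induction P with
  | nil => intro; simp [pathEdges]
  | cons a R ih =>
    intro hnd
    match R with
    | [] => simp [pathEdges]
    | b :: R' =>
      rw [pathEdges_cons_cons]
      have hnd' := List.nodup_cons.1 hnd
      refine List.nodup_cons.2 ⟨?_, ih hnd'.2⟩
      intro hmem
      exact hnd'.1 ((mem_pathEdges_fst hmem).1)

lemma tree_le_path (hnn : ∀ i j, 0 ≤ A i j) (h1 : ∀ i j, A i j ≤ 1)
    {T : Finset (Fin n × Fin n)} {P : List (Fin n)}
    (hsub : ∀ e ∈ pathEdges P, e ∈ T) (hnd : (pathEdges P).Nodup) :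
    treeWeight A T ≤ pathWeight A P := by
  set E := (pathEdges P).toFinset with hE
  have hEsub : E ⊆ T := by
    intro e he
    exact hsub e (List.mem_toFinset.1 he)
  have hprodE : pathWeight A P = ∏ e ∈ E, A e.1 e.2 := by
    rw [pathWeight, hE, List.prod_toFinset _ hnd]
  have hsdiff := Finset.prod_sdiff (f := fun e : Fin n × Fin n => A e.1 e.2) hEsub
  rw [treeWeight, ← hsdiff, hprodE]
  have h1' : (∏ e ∈ T \ E, A e.1 e.2) ≤ 1 :=
    Finset.prod_le_one (fun e _ => hnn e.1 e.2) (fun e _ => h1 e.1 e.2)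
  have h0 : 0 ≤ ∏ e ∈ E, A e.1 e.2 := Finset.prod_nonneg fun e _ => hnn e.1 e.2
  calc (∏ e ∈ T \ E, A e.1 e.2) * ∏ e ∈ E, A e.1 e.2
      ≤ 1 * ∏ e ∈ E, A e.1 e.2 := mul_le_mul_of_nonneg_right h1' h0
    _ = ∏ e ∈ E, A e.1 e.2 := one_mul _


end Aux16

/-- if `A` is irreducible max-stochastic, its critical graph
`D^C(A)` is strongly connected, and `w` is the maximal RST vector of `A`, then
`wⱼ = min_{i ∈ N^C(A)} a*_{ij}` for every `j`. -/
theorem stmt_16 {n : ℕ} (A : Matrix (Fin n) (Fin n) ℝ)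
    (hnn : ∀ i j, 0 ≤ A i j) (hirr : IrreducibleMat A) (hms : MaxStochastic A)
    (hcc : ∀ i j, CriticalNode A i → CriticalNode A j →
      Relation.ReflTransGen (CriticalEdge A) i j)
    (w : Fin n → ℝ) (hw : IsMaxRSTVector A w)
    (S : Matrix (Fin n) (Fin n) ℝ) (hS : IsKleeneStar A S) :
    ∀ j : Fin n, IsLeast {x | ∃ i, CriticalNode A i ∧ x = S i j} (w j) := by
  classical
  intro j
  have h1 : ∀ a b, A a b ≤ 1 := fun a b => (hms a).2 ⟨b, rfl⟩
  have hex : ∀ a, ∃ k, A a k = 1 := fun a => (hms a).1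
  choose f hf using hex
  obtain ⟨T, hT, hwT⟩ := (hw j).1
  have hub := (hw j).2
  have hreachC : ∀ k, ∃ m, CriticalNode A m ∧ Relation.ReflTransGen (Aux16.w1 A) k m :=
    Aux16.reach_crit f hf
  -- part A : for any i ≠ j, w j ≤ S i j
  have partA : ∀ i : Fin n, i ≠ j → w j ≤ S i j := by
    intro i hij
    obtain ⟨P, hh, hl, hlen, hsub, hnd⟩ := Aux16.tree_path hT i hij
    have hndE := Aux16.nodup_pathEdges hnd
    have hle1 : treeWeight A T ≤ pathWeight A P := Aux16.tree_le_path hnn h1 hsub hndE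
    have hpathin : IsPathIn A i j P := by
      refine ⟨hh, hl, hlen, ?_⟩
      intro e he
      exact hT.1 e (hsub e he)
    have hle2 : pathWeight A P ≤ S i j := by
      rw [hS.2 i j hij]
      apply le_csSup
      · refine ⟨1, ?_⟩
        rintro x (rfl | ⟨P', hP', rfl⟩)
        · norm_num
        · exact Aux16.pathWeight_le_one hnn h1 P'
      · exact Set.mem_insert_of_mem _ ⟨P, hpathin, rfl⟩
    rw [hwT]
    linarith
  -- reach into a base containing a given critical node
  have hreach_to : ∀ i0 : Fin n, CriticalNode A i0 → ∀ k : Fin n,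
      Relation.ReflTransGen (Aux16.w1 A) k i0 := by
    intro i0 hi0 k
    obtain ⟨m, hmc, hwk⟩ := hreachC k
    have h2 : Relation.ReflTransGen (Aux16.w1 A) m i0 :=
      Relation.ReflTransGen.mono (p := Aux16.w1 A) (fun a b h => Aux16.crit_edge_one hnn h1 h) m i0 (hcc m i0 hmc hi0)
    exact hwk.trans h2
  constructor
  · -- membership
    by_cases hjc : CriticalNode A j
    · refine ⟨j, hjc, ?_⟩
      have hSjj : S j j = 1 := hS.1 j
      have hle : w j ≤ 1 := by
        rw [hwT]; exact Aux16.treeWeight_le_one hnn h1 T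
      have hge : 1 ≤ w j := by
        have hreach0 : ∀ k, ∃ m ∈ Aux16.Bset j (∅ : Finset (Fin n × Fin n)),
            Relation.ReflTransGen (Aux16.w1 A) k m := by
          intro k
          exact ⟨j, Finset.mem_insert_self _ _, hreach_to j hjc k⟩
        obtain ⟨T', hT', hwT'⟩ := Aux16.ext_aux (Finset.univ \ Aux16.Bset j
            (∅ : Finset (Fin n × Fin n))).card ∅ (Aux16.Inv.empty A j) le_rfl hreach0
        have hone : treeWeight A T' = 1 := by
          rw [hwT']; simp [treeWeight]
        have := hub ⟨T', hT', rfl⟩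
        rw [hone] at this
        exact this
      rw [hSjj]
      linarith
    · obtain ⟨m0, hm0, _⟩ := hreachC j
      refine ⟨m0, hm0, ?_⟩
      have hm0j : m0 ≠ j := fun h => hjc (h ▸ hm0)
      have hge : w j ≤ S m0 j := partA m0 hm0j
      have hle : S m0 j ≤ w j := by
        rw [hS.2 m0 j hm0j]
        apply csSup_le ⟨0, Set.mem_insert _ _⟩
        rintro x (rfl | ⟨P, hP, rfl⟩)
        · rw [hwT]; exact Aux16.treeWeight_nonneg hnn T
        · obtain ⟨hh, hl, hlen, hpos⟩ := hP
          obtain ⟨T0, hI0, hm0B, hwB⟩ := Aux16.build hnn h1 P m0 hh hl hpos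
          have hreach0 : ∀ k, ∃ m ∈ Aux16.Bset j T0,
              Relation.ReflTransGen (Aux16.w1 A) k m := by
            intro k
            exact ⟨m0, hm0B, hreach_to m0 hm0 k⟩
          obtain ⟨T', hT', hwT'⟩ := Aux16.ext_aux
            (Finset.univ \ Aux16.Bset j T0).card T0 hI0 le_rfl hreach0
          have := hub ⟨T', hT', rfl⟩
          rw [hwT'] at this
          linarith
      linarith
  · -- lower bound
    rintro x ⟨i, hic, rfl⟩
    by_cases hij : i = j
    · subst hij
      rw [hS.1 i, hwT]
      exact Aux16.treeWeight_le_one hnn h1 T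
    · exact partA i hij
end

section
/- Let A be an n×n irreducible matrix with nonnegative real entries, and suppose d_i := max_{1≤j≤n} a_{ij} > 0 for every i. Let w be the maximal RST vector of A. Then Aᵀ ⊗ w = Dw, where D is the diagonal matrix with entries d_i; that is, max_{1≤j≤n} a_{ji} w_j = d_i w_i for every i ∈ {1,…,n}. -/
open scoped Classical

section Helpers

/-- In an `i`-tree, every node reaches the root `i`. -/
lemma reach_root {V : Type*} [Finite V] {R : V → V → Prop} {i : V} {T : Finset (V × V)}
    (hT : IsITree R i T) : ∀ j, Relation.ReflTransGen (fun a b => (a, b) ∈ T) j i := by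
  haveI htr : IsTrans V (fun k j => Relation.TransGen (fun a b => (a, b) ∈ T) j k) :=
    ⟨fun a b c hab hbc => hbc.trans hab⟩
  haveI hir : IsIrrefl V (fun k j => Relation.TransGen (fun a b => (a, b) ∈ T) j k) :=
    ⟨fun a => hT.2.2.2 a⟩
  have hwf : WellFounded (fun k j : V => (j, k) ∈ T) :=
    Subrelation.wf (fun h => Relation.TransGen.single h)
      (Finite.wellFounded_of_trans_of_irrefl
        (fun k j => Relation.TransGen (fun a b => (a, b) ∈ T) j k))
  intro j
  refine hwf.induction (C := fun j => Relation.ReflTransGen (fun a b => (a, b) ∈ T) j i) j fun j ih => ?_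
  by_cases hj : j = i
  · exact hj ▸ Relation.ReflTransGen.refl
  · obtain ⟨k, hk, -⟩ := hT.2.1 j hj
    exact Relation.ReflTransGen.head hk (ih k hk)

/-- In a functional graph with sink `i`, any path ending at `j` cannot be continued
to `i` while avoiding `j`'s outgoing edges. -/
lemma no_reach_avoiding {V : Type*} {s s₀ : V → V → Prop} {i j : V}
    (hfun : ∀ ⦃x y z⦄, s x y → s x z → y = z)
    (hsub : ∀ ⦃x y⦄, s₀ x y → s x y ∧ x ≠ j)
    (hino : ∀ y, ¬ s i y) (hji : j ≠ i) :
    ∀ x, Relation.ReflTransGen s x j → ¬ Relation.ReflTransGen s₀ x i := by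
  intro x hxj
  induction hxj using Relation.ReflTransGen.head_induction_on with
  | refl =>
    intro h
    rcases h.cases_head with h | ⟨c, hc, _⟩
    · exact hji h
    · exact (hsub hc).2 rfl
  | head hxy hyj ih =>
    intro h
    rcases h.cases_head with h | ⟨c, hc, hci⟩
    · exact hino _ (h ▸ hxy)
    · exact ih (by rwa [hfun (hsub hc).1 hxy] at hci)

/-- Decomposition of a path using an extra edge `(a, b)`. -/
lemma transGen_insert_edge {V : Type*} {s : V → V → Prop} {a b : V} :
    ∀ {x y : V}, Relation.TransGen (fun u v => s u v ∨ (u = a ∧ v = b)) x y →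
      Relation.TransGen s x y ∨
        (Relation.ReflTransGen s x a ∧ Relation.ReflTransGen s b y) := by
  intro x y h
  induction h with
  | single h =>
    rcases h with h | ⟨rfl, rfl⟩
    · exact Or.inl (Relation.TransGen.single h)
    · exact Or.inr ⟨Relation.ReflTransGen.refl, Relation.ReflTransGen.refl⟩
  | tail h hstep ih =>
    rcases hstep with hstep | ⟨rfl, rfl⟩
    · rcases ih with ih | ⟨h1, h2⟩
      · exact Or.inl (ih.tail hstep)
      · exact Or.inr ⟨h1, h2.tail hstep⟩
    · rcases ih with ih | ⟨h1, _⟩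
      · exact Or.inr ⟨ih.to_reflTransGen, Relation.ReflTransGen.refl⟩
      · exact Or.inr ⟨h1, Relation.ReflTransGen.refl⟩

/-- Tree surgery: in a `q`-tree `T`, remove the edge `(u, v)` and insert the edge
`(q, z)`; the result is a `u`-tree, provided `z` cannot reach `q` in the remainder. -/
lemma tree_swap {V : Type*} [DecidableEq V] {R : V → V → Prop} {q u v z : V} {T : Finset (V × V)}
    (hT : IsITree R q T) (huv : (u, v) ∈ T) (hz : R q z)
    (hno : ¬ Relation.ReflTransGen (fun a b => (a, b) ∈ T.erase (u, v)) z q) :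
    IsITree R u (insert (q, z) (T.erase (u, v))) := by
  set S := T.erase (u, v) with hS
  have hqu : u ≠ q := fun h => hT.2.2.1 v (h ▸ huv)
  have hSsub : ∀ ⦃e : V × V⦄, e ∈ S → e ∈ T := fun e he => Finset.mem_of_mem_erase he
  refine ⟨?_, ?_, ?_, ?_⟩
  · intro e he
    rcases Finset.mem_insert.1 he with rfl | he
    · exact hz
    · exact hT.1 e (hSsub he)
  · intro m hm
    by_cases hmq : m = q
    · subst hmq
      refine ⟨z, Finset.mem_insert_self _ _, fun y hy => ?_⟩
      rcases Finset.mem_insert.1 hy with hy | hy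
      · exact (Prod.mk.injEq .. ▸ hy).2
      · exact absurd (hSsub hy) (hT.2.2.1 y)
    · obtain ⟨x, hx, hxu⟩ := hT.2.1 m hmq
      refine ⟨x, Finset.mem_insert_of_mem (Finset.mem_erase.2 ⟨fun h => hm ((Prod.mk.injEq .. ▸ h).1), hx⟩), fun y hy => ?_⟩
      rcases Finset.mem_insert.1 hy with hy | hy
      · exact absurd (Prod.mk.injEq .. ▸ hy).1 hmq
      · exact hxu y (hSsub hy)
  · intro x hx
    rcases Finset.mem_insert.1 hx with hx | hx
    · exact hqu (Prod.mk.injEq .. ▸ hx).1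
    · obtain ⟨c, -, hc⟩ := hT.2.1 u hqu
      have hcu : c = v := (hc v huv).symm ▸ rfl
      have : x = v := by
        have := hc x (hSsub hx)
        rw [this, ← hc v huv]
      exact (Finset.mem_erase.1 hx).1 (by rw [this])
  · intro m hm
    have hiff : ∀ a b₁ : V, ((a, b₁) ∈ insert (q, z) S) ↔ ((a, b₁) ∈ S ∨ (a = q ∧ b₁ = z)) := by
      intro a b₁
      constructor
      · intro h
        rcases Finset.mem_insert.1 h with h | h
        · exact Or.inr ⟨(Prod.mk.injEq .. ▸ h).1, (Prod.mk.injEq .. ▸ h).2⟩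
        · exact Or.inl h
      · rintro (h | ⟨rfl, rfl⟩)
        · exact Finset.mem_insert_of_mem h
        · exact Finset.mem_insert_self _ _
    have hm' : Relation.TransGen (fun a b₁ => (a, b₁) ∈ S ∨ (a = q ∧ b₁ = z)) m m :=
      Relation.TransGen.mono (fun a b₁ h => (hiff a b₁).1 h) _ _ hm
    rcases transGen_insert_edge hm' with h | ⟨h1, h2⟩
    · exact hT.2.2.2 m (Relation.TransGen.mono (fun a b₁ hab => hSsub hab) _ _ h)
    · exact hno (h2.trans h1)

end Helpers

/-- if `A` is irreducible nonnegative with row maxima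
`dᵢ = max_j a_{ij} > 0` and `w` is the maximal RST vector of `A`, then
`Aᵀ ⊗ w = D w`, i.e. `max_j a_{ji} w_j = dᵢ wᵢ` for every `i`. -/
theorem stmt_18 {n : ℕ} (A : Matrix (Fin n) (Fin n) ℝ)
    (hnn : ∀ i j, 0 ≤ A i j) (hirr : IrreducibleMat A)
    (d : Fin n → ℝ) (hd : ∀ i, IsGreatest (Set.range (A i)) (d i))
    (hdpos : ∀ i, 0 < d i)
    (w : Fin n → ℝ) (hw : IsMaxRSTVector A w) :
    ∀ i : Fin n, IsGreatest (Set.range fun j => A j i * w j) (d i * w i) := by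
  intro i
  have htw_nonneg : ∀ T : Finset (Fin n × Fin n), 0 ≤ treeWeight A T :=
    fun T => Finset.prod_nonneg fun e _ => hnn e.1 e.2
  have hw_nonneg : ∀ m, 0 ≤ w m := by
    intro m
    obtain ⟨T, hT, hwT⟩ := (hw m).1
    rw [hwT]; exact htw_nonneg T
  -- functional structure of a tree
  have hfun : ∀ {r : Fin n} {T : Finset (Fin n × Fin n)}, IsITree (edgeRel A) r T →
      ∀ ⦃x y z : Fin n⦄, (x, y) ∈ T → (x, z) ∈ T → y = z := by
    intro r T hT x y z hxy hxz
    have hxr : x ≠ r := fun h => hT.2.2.1 y (h ▸ hxy)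
    obtain ⟨c, -, hc⟩ := hT.2.1 x hxr
    rw [hc y hxy, hc z hxz]
  -- the upper bound
  have hub : ∀ p, A p i * w p ≤ d i * w i := by
    intro p
    by_cases hpi : p = i
    · subst hpi
      exact mul_le_mul_of_nonneg_right ((hd p).2 ⟨p, rfl⟩) (hw_nonneg p)
    · by_cases hA : A p i ≤ 0
      · rw [le_antisymm hA (hnn p i), zero_mul]
        exact mul_nonneg (hdpos i).le (hw_nonneg i)
      · push_neg at hA
        obtain ⟨T, hT, hwp⟩ := (hw p).1
        have hip : i ≠ p := fun h => hpi h.symm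
        obtain ⟨k, hik, -⟩ := hT.2.1 i hip
        have hino : ∀ y : Fin n, (i, y) ∉ T.erase (i, k) := by
          intro y hy
          have : y = k := hfun hT (Finset.mem_of_mem_erase hy) hik
          exact (Finset.mem_erase.1 hy).1 (by rw [this])
        have hno : ¬ Relation.ReflTransGen (fun a b => (a, b) ∈ T.erase (i, k)) i p := by
          intro h
          rcases h.cases_head with h | ⟨c, hc, -⟩
          · exact hip h
          · exact hino c hc
        have hT' : IsITree (edgeRel A) i (insert (p, i) (T.erase (i, k))) :=
          tree_swap hT hik hA hno
        have hle : treeWeight A (insert (p, i) (T.erase (i, k))) ≤ w i :=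
          (hw i).2 ⟨_, hT', rfl⟩
        have hpiS : (p, i) ∉ T.erase (i, k) :=
          fun h => hT.2.2.1 i (Finset.mem_of_mem_erase h)
        have h1 : treeWeight A T = A i k * treeWeight A (T.erase (i, k)) :=
          (Finset.mul_prod_erase T (fun e => A e.1 e.2) hik).symm
        have h2 : treeWeight A (insert (p, i) (T.erase (i, k)))
            = A p i * treeWeight A (T.erase (i, k)) :=
          Finset.prod_insert hpiS
        have hAik : A i k ≤ d i := (hd i).2 ⟨k, rfl⟩
        calc A p i * w p = A i k * (A p i * treeWeight A (T.erase (i, k))) := by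
              rw [hwp, h1]; ring
          _ ≤ d i * (A p i * treeWeight A (T.erase (i, k))) :=
              mul_le_mul_of_nonneg_right hAik
                (mul_nonneg hA.le (htw_nonneg _))
          _ = d i * treeWeight A (insert (p, i) (T.erase (i, k))) := by rw [h2]
          _ ≤ d i * w i := mul_le_mul_of_nonneg_left hle (hdpos i).le
  refine ⟨?_, ?_⟩
  · -- membership: some p attains the value
    obtain ⟨k, hk⟩ := (hd i).1
    by_cases hki : k = i
    · refine ⟨i, ?_⟩
      show A i i * w i = d i * w i
      rw [← hk, hki]
    · obtain ⟨T, hT, hwi⟩ := (hw i).1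
      have hreach : Relation.ReflTransGen (fun a b => (a, b) ∈ T) k i := reach_root hT k
      rcases hreach.cases_tail with h | ⟨j, hkj, hji⟩
      · exact absurd h.symm hki
      · have hji' : j ≠ i := fun h => hT.2.2.1 i (h ▸ hji)
        have hAik : 0 < A i k := hk ▸ hdpos i
        have hno : ¬ Relation.ReflTransGen (fun a b => (a, b) ∈ T.erase (j, i)) k i := by
          refine no_reach_avoiding (hfun hT) ?_ (fun y => hT.2.2.1 y) hji' k hkj
          intro x y hxy
          refine ⟨Finset.mem_of_mem_erase hxy, fun hxj => ?_⟩
          subst hxj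
          have : y = i := hfun hT (Finset.mem_of_mem_erase hxy) hji
          exact (Finset.mem_erase.1 hxy).1 (by rw [this])
        have hT' : IsITree (edgeRel A) j (insert (i, k) (T.erase (j, i))) :=
          tree_swap hT hji hAik hno
        have hle : treeWeight A (insert (i, k) (T.erase (j, i))) ≤ w j :=
          (hw j).2 ⟨_, hT', rfl⟩
        have hikS : (i, k) ∉ T.erase (j, i) :=
          fun h => hT.2.2.1 k (Finset.mem_of_mem_erase h)
        have h1 : treeWeight A T = A j i * treeWeight A (T.erase (j, i)) :=
          (Finset.mul_prod_erase T (fun e => A e.1 e.2) hji).symm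
        have h2 : treeWeight A (insert (i, k) (T.erase (j, i)))
            = A i k * treeWeight A (T.erase (j, i)) :=
          Finset.prod_insert hikS
        have hge : d i * w i ≤ A j i * w j := by
          calc d i * w i = A i k * treeWeight A T := by rw [hwi, hk]
            _ = A j i * treeWeight A (insert (i, k) (T.erase (j, i))) := by
                rw [h1, h2]; ring
            _ ≤ A j i * w j := mul_le_mul_of_nonneg_left hle (hnn j i)
        exact ⟨j, le_antisymm (hub j) hge⟩
  · rintro x ⟨p, rfl⟩
    exact hub p
end

section
/- Let A be an n×n irreducible matrix with nonnegative real entries, let d_i := max_{1≤j≤n} a_{ij} > 0 for every i, and let Â be the matrix with entries â_{ij} = a_{ij}/d_i. Let w be the maximal RST vector of A and ŵ the maximal RST vector of Â. Then for every i ∈ {1,…,n}, ŵ_i = (d_i / ∏_{k=1}^n d_k) · w_i. -/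
open scoped Classical

/-- let `A` be irreducible nonnegative with row maxima
`dᵢ = max_j a_{ij} > 0`, let `Â` have entries `âᵢⱼ = aᵢⱼ / dᵢ`, and let `w`, `ŵ` be
the maximal RST vectors of `A`, `Â` respectively. Then
`ŵᵢ = (dᵢ / ∏ₖ dₖ) · wᵢ` for every `i`. -/
theorem stmt_19 {n : ℕ} (A B : Matrix (Fin n) (Fin n) ℝ)
    (hnn : ∀ i j, 0 ≤ A i j) (hirr : IrreducibleMat A)
    (d : Fin n → ℝ) (hd : ∀ i, IsGreatest (Set.range (A i)) (d i))
    (hdpos : ∀ i, 0 < d i)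
    (hB : ∀ i j, B i j = A i j / d i)
    (w wh : Fin n → ℝ) (hw : IsMaxRSTVector A w) (hwh : IsMaxRSTVector B wh) :
    ∀ i : Fin n, wh i = (d i / ∏ k, d k) * w i := by
  intro i
  have hprodpos : 0 < ∏ k, d k := Finset.prod_pos fun k _ => hdpos k
  set c : ℝ := d i / ∏ k, d k with hc
  have hcpos : 0 < c := div_pos (hdpos i) hprodpos
  have hE : edgeRel B = edgeRel A := by
    funext a b
    simp only [edgeRel, hB, eq_iff_iff]
    rw [lt_div_iff₀ (hdpos a), zero_mul]
  have key : ∀ T : Finset (Fin n × Fin n), IsITree (edgeRel A) i T →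
      treeWeight B T = c * treeWeight A T := by
    rintro T ⟨h1, h2, h3, h4⟩
    have hsrc : ∏ e ∈ T, d e.1 = ∏ j ∈ Finset.univ.erase i, d j := by
      apply Finset.prod_bij (fun e (_ : e ∈ T) => e.1)
      · intro e he
        refine Finset.mem_erase.2 ⟨?_, Finset.mem_univ _⟩
        intro h
        have he' : (e.1, e.2) ∈ T := by simpa using he
        rw [h] at he'
        exact h3 e.2 he'
      · intro a ha b hb h
        have hane : a.1 ≠ i := by
          intro hh
          have ha' : (a.1, a.2) ∈ T := by simpa using ha
          rw [hh] at ha'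
          exact h3 a.2 ha'
        obtain ⟨k, _, huniq⟩ := h2 a.1 hane
        have ha' : (a.1, a.2) ∈ T := by simpa using ha
        have hb' : (a.1, b.2) ∈ T := by rw [h]; simpa using hb
        have : a.2 = b.2 := by rw [huniq a.2 ha', huniq b.2 hb']
        exact Prod.ext h this
      · intro j hj
        obtain ⟨k, hk, _⟩ := h2 j (Finset.mem_erase.1 hj).1
        exact ⟨(j, k), hk, rfl⟩
      · intro e _; rfl
    have herase : ∏ j ∈ Finset.univ.erase i, d j = (∏ k, d k) / d i := by
      rw [eq_div_iff (ne_of_gt (hdpos i)), mul_comm]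
      exact Finset.mul_prod_erase Finset.univ d (Finset.mem_univ i)
    have : treeWeight B T = treeWeight A T / ∏ e ∈ T, d e.1 := by
      simp only [treeWeight]
      rw [← Finset.prod_div_distrib]
      exact Finset.prod_congr rfl fun e _ => by rw [hB]
    rw [this, hsrc, herase, hc]
    field_simp
  obtain ⟨⟨T0, hT0, hwT0⟩, hub⟩ := hw i
  have hge : IsGreatest {x | ∃ T, IsITree (edgeRel B) i T ∧ x = treeWeight B T}
      (c * w i) := by
    constructor
    · exact ⟨T0, by rw [hE]; exact hT0, by rw [key T0 hT0, hwT0]⟩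
    · rintro x ⟨T, hT, rfl⟩
      rw [hE] at hT
      rw [key T hT]
      exact mul_le_mul_of_nonneg_left (hub ⟨T, hT, rfl⟩) hcpos.le
  exact (hwh i).unique hge
end
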